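/- Let S_1, ..., S_k be 0-dimensional simplicial complexes each with at least 2 vertices, X = S_1 ∗ ... ∗ S_k their join, Δ a maximal (k−1)-simplex of X with vertices s_i ∈ S_i, and Y the complex X with the interior of Δ removed. Then the inclusion ∂Δ → Y is nullhomotopic. -/

import Mathlib

/-- A point of the join `S_1 ∗ ⋯ ∗ S_k` of the `0`-dimensional complexes with
vertex sets `S i`: a convex combination of vertices using at most one vertex
from each factor. -/
def JoinPt {k : ℕ} (S : Fin k → Type) (f : (Σ i, S i) → ℝ) : Prop :=
  (∀ v, 0 ≤ f v) ∧ (∑ᶠ v, f v = 1) ∧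
    ∀ (i : Fin k) (a b : S i), f ⟨i, a⟩ ≠ 0 → f ⟨i, b⟩ ≠ 0 → a = b

/-- The vertex set of the maximal `(k-1)`-simplex `Δ` with vertices `s i ∈ S i`. -/
def DeltaV {k : ℕ} (S : Fin k → Type) (s : ∀ i, S i) : Set (Σ i, S i) :=
  Set.range fun i => (⟨i, s i⟩ : Σ i, S i)

/-- `Y`: the join `X = S_1 ∗ ⋯ ∗ S_k` with the (open) interior of the maximal
simplex `Δ` removed. -/
def Yspace {k : ℕ} (S : Fin k → Type) (s : ∀ i, S i) : Set ((Σ i, S i) → ℝ) :=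
  {f | JoinPt S f ∧ ¬(∀ v, f v ≠ 0 ↔ v ∈ DeltaV S s)}

/-- The boundary sphere `∂Δ` of the maximal simplex `Δ`: points supported on a
proper subset of the vertices of `Δ`. -/
def BoundaryDelta {k : ℕ} (S : Fin k → Type) (s : ∀ i, S i) : Set ((Σ i, S i) → ℝ) :=
  {f | JoinPt S f ∧ (∀ v, f v ≠ 0 → v ∈ DeltaV S s) ∧ ∃ i : Fin k, f ⟨i, s i⟩ = 0}

lemma boundaryDelta_subset_Y {k : ℕ} (S : Fin k → Type) (s : ∀ i, S i) :
    BoundaryDelta S s ⊆ Yspace S s := by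
  rintro f ⟨hJ, hsupp, i, hi⟩
  exact ⟨hJ, fun hall => (hall ⟨i, s i⟩).mpr ⟨i, rfl⟩ hi⟩

/-- The inclusion `∂Δ → Y`. -/
def inclBoundary {k : ℕ} (S : Fin k → Type) (s : ∀ i, S i) :
    C(BoundaryDelta S s, Yspace S s) :=
  ⟨Set.inclusion (boundaryDelta_subset_Y S s),
    continuous_inclusion (boundaryDelta_subset_Y S s)⟩

/-- `X` is `m`-connected: nonempty, path-connected, and `π_i X = 0` for `1 ≤ i ≤ m`.
For `m = -1` this just means nonempty; for `m < -1` it is vacuous. -/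
def NConnectedSpace (m : ℤ) (X : Type*) [TopologicalSpace X] : Prop :=
  (-1 ≤ m → Nonempty X) ∧ (0 ≤ m → PathConnectedSpace X) ∧
    ∀ i : ℕ, 0 < i → (i : ℤ) ≤ m → ∀ x : X, Subsingleton (HomotopyGroup (Fin i) X x)

/-!
Identify the hyperoctahedron `Z = {s₁,τ₁} ∗ ⋯ ∗ {s_k,τ_k}` with the `ℓ¹`-unit sphere of `ℝᵏ`,
the coordinate `yᵢ > 0` giving weight to `sᵢ` and `yᵢ < 0` to `τᵢ`. Then `Δ` is the part of
the sphere in the open positive orthant, and `∂Δ` lies in `U = ℝᵏ ∖ ({0} ∪ (0,∞)ᵏ)`, which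
`ℓ¹`-normalisation maps into `Y`. The set `U` is star-convex about `-𝟙`: the segment from a
point with a nonpositive coordinate to `-𝟙` keeps that coordinate nonpositive and never passes
through `0`. Hence `U` is contractible, and `∂Δ → U → Y` is nullhomotopic.
-/

open Finset ContinuousMap

theorem finsum_sigma_eq_sum_of_support_subset {ι : Type*} [Fintype ι] {S : ι → Type*}
    (g : (Σ i, S i) → ℝ) (t : ∀ i, Finset (S i)) (hg : ∀ v, g v ≠ 0 → v.2 ∈ t v.1) :
    ∑ᶠ v, g v = ∑ i, ∑ a ∈ t i, g ⟨i, a⟩ := by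
  rw [finsum_eq_finsetSum_of_support_subset g (s := univ.sigma t) fun v hv => by
    simpa using hg v hv, sum_sigma]

theorem sum_abs_pos_of_ne_zero {ι : Type*} [Fintype ι] {y : ι → ℝ} (hy : y ≠ 0) :
    0 < ∑ i, |y i| := by
  obtain ⟨j, hj⟩ := Function.ne_iff.mp hy
  exact sum_pos' (fun i _ => abs_nonneg _) ⟨j, mem_univ j, abs_pos.mpr hj⟩

def puncturedComplPosOrthant (k : ℕ) : Set (Fin k → ℝ) :=
  {y | y ≠ 0 ∧ ∃ j, y j ≤ 0}

theorem starConvex_puncturedComplPosOrthant (k : ℕ) :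
    StarConvex ℝ (-1) (puncturedComplPosOrthant k) := by
  rintro y ⟨hy, j, hyj⟩ a b ha hb hab
  have hj : (a • (-1) + b • y) j ≤ 0 := by
    simp only [Pi.add_apply, Pi.smul_apply, Pi.neg_apply, Pi.one_apply, smul_eq_mul]
    nlinarith
  refine ⟨fun h0 => hy ?_, j, hj⟩
  have ha0 : a = 0 := by
    have := congrFun h0 j
    simp only [Pi.add_apply, Pi.smul_apply, Pi.neg_apply, Pi.one_apply, smul_eq_mul,
      Pi.zero_apply] at this
    nlinarith
  simpa [ha0, show b = 1 by linarith] using h0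

theorem contractibleSpace_puncturedComplPosOrthant {k : ℕ} (hk : 1 ≤ k) :
    ContractibleSpace (puncturedComplPosOrthant k) :=
  (starConvex_puncturedComplPosOrthant k).contractibleSpace
    ⟨-1, fun h => by simpa using congrFun h ⟨0, hk⟩, ⟨0, hk⟩, by simp⟩

section CrossPolytope

variable {k : ℕ} {S : Fin k → Type} (s τ : ∀ i, S i)

open Classical in
noncomputable def crossPolytopePoint (y : Fin k → ℝ) : (Σ i, S i) → ℝ := fun v =>
  (if v.2 = s v.1 then (y v.1)⁺ else if v.2 = τ v.1 then (y v.1)⁻ else 0) / ∑ i, |y i|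

variable {s τ}

theorem crossPolytopePoint_apply_fst (y : Fin k → ℝ) (i : Fin k) :
    crossPolytopePoint s τ y ⟨i, s i⟩ = (y i)⁺ / ∑ i, |y i| := by
  simp [crossPolytopePoint]

theorem crossPolytopePoint_apply_snd (hτ : ∀ i, τ i ≠ s i) (y : Fin k → ℝ) (i : Fin k) :
    crossPolytopePoint s τ y ⟨i, τ i⟩ = (y i)⁻ / ∑ i, |y i| := by
  simp [crossPolytopePoint, hτ i]

theorem eq_and_pos_or_eq_and_neg_of_crossPolytopePoint_ne_zero {y : Fin k → ℝ} {i : Fin k}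
    {a : S i} (h : crossPolytopePoint s τ y ⟨i, a⟩ ≠ 0) :
    (a = s i ∧ 0 < y i) ∨ (a = τ i ∧ y i < 0) := by
  unfold crossPolytopePoint at h
  split_ifs at h with hs hτ
  · exact .inl ⟨hs, posPart_pos_iff.mp ((posPart_nonneg _).lt_of_ne' (left_ne_zero_of_mul h))⟩
  · exact .inr ⟨hτ, negPart_pos_iff.mp ((negPart_nonneg _).lt_of_ne' (left_ne_zero_of_mul h))⟩
  · simp at h

open Classical in
theorem joinPt_crossPolytopePoint (hτ : ∀ i, τ i ≠ s i) {y : Fin k → ℝ} (hy : y ≠ 0) :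
    JoinPt S (crossPolytopePoint s τ y) := by
  have hN := sum_abs_pos_of_ne_zero hy
  refine ⟨fun v => ?_, ?_, fun i a b ha hb => ?_⟩
  · unfold crossPolytopePoint
    split_ifs <;> positivity
  · rw [finsum_sigma_eq_sum_of_support_subset _ (fun i => {s i, τ i}) fun ⟨i, a⟩ h => by
      rcases eq_and_pos_or_eq_and_neg_of_crossPolytopePoint_ne_zero h with ⟨rfl, -⟩ | ⟨rfl, -⟩
        <;> simp]
    simp_rw [sum_pair (hτ _).symm, crossPolytopePoint_apply_fst, crossPolytopePoint_apply_snd hτ,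
      ← add_div, posPart_add_negPart, ← sum_div, div_self hN.ne']
  · rcases eq_and_pos_or_eq_and_neg_of_crossPolytopePoint_ne_zero ha with ⟨rfl, ha⟩ | ⟨rfl, ha⟩ <;>
      rcases eq_and_pos_or_eq_and_neg_of_crossPolytopePoint_ne_zero hb with ⟨rfl, hb⟩ | ⟨rfl, hb⟩
    all_goals first | rfl | linarith

theorem crossPolytopePoint_mem_Yspace (hτ : ∀ i, τ i ≠ s i) {y : Fin k → ℝ}
    (hy : y ∈ puncturedComplPosOrthant k) : crossPolytopePoint s τ y ∈ Yspace S s := by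
  obtain ⟨hy0, j, hyj⟩ := hy
  refine ⟨joinPt_crossPolytopePoint hτ hy0, fun hsupp => (hsupp ⟨j, s j⟩).mpr ⟨j, rfl⟩ ?_⟩
  rw [crossPolytopePoint_apply_fst, posPart_eq_zero.mpr hyj, zero_div]

theorem continuousOn_crossPolytopePoint :
    ContinuousOn (crossPolytopePoint (k := k) s τ) {y | y ≠ 0} := by
  refine continuousOn_pi.mpr fun v => ContinuousOn.div ?_ (by fun_prop) fun y hy => ?_
  · split_ifs <;> fun_prop
  · exact (sum_abs_pos_of_ne_zero hy).ne'

theorem snd_eq_of_mem_DeltaV {v : Σ i, S i} (hv : v ∈ DeltaV S s) : v.2 = s v.1 := by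
  obtain ⟨i, rfl⟩ := hv
  rfl

theorem finsum_eq_sum_of_support_subset_DeltaV {f : (Σ i, S i) → ℝ}
    (hsupp : ∀ v, f v ≠ 0 → v ∈ DeltaV S s) : ∑ᶠ v, f v = ∑ i, f ⟨i, s i⟩ := by
  rw [finsum_sigma_eq_sum_of_support_subset f (fun i => {s i}) fun v hv => by
    simpa using snd_eq_of_mem_DeltaV (hsupp v hv)]
  simp

theorem crossPolytopePoint_barycentric {f : (Σ i, S i) → ℝ} (hf : JoinPt S f)
    (hsupp : ∀ v, f v ≠ 0 → v ∈ DeltaV S s) :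
    crossPolytopePoint s τ (fun i => f ⟨i, s i⟩) = f := by
  have hN : ∑ i, |f ⟨i, s i⟩| = 1 := by
    simp_rw [abs_of_nonneg (hf.1 _), ← finsum_eq_sum_of_support_subset_DeltaV hsupp, hf.2.1]
  funext ⟨i, a⟩
  unfold crossPolytopePoint
  rw [hN, div_one]
  by_cases ha : a = s i
  · subst ha
    simp [hf.1]
  · have hfa : f ⟨i, a⟩ = 0 := by_contra fun h => ha (snd_eq_of_mem_DeltaV (hsupp _ h))
    simp [ha, hfa, hf.1]

variable (S s) in
def boundaryCoords : C(BoundaryDelta S s, puncturedComplPosOrthant k) where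
  toFun f := ⟨fun i => (f : (Σ i, S i) → ℝ) ⟨i, s i⟩, fun h0 => by
    have hsum := f.2.1.2.1
    rw [finsum_eq_sum_of_support_subset_DeltaV f.2.2.1] at hsum
    simp [congrFun h0] at hsum,
    f.2.2.2.imp fun _ hi => hi.le⟩
  continuous_toFun := by
    refine Continuous.subtype_mk ?_ _
    exact continuous_pi fun i => (continuous_apply _).comp continuous_subtype_val

noncomputable def crossPolytopeMap (hτ : ∀ i, τ i ≠ s i) :
    C(puncturedComplPosOrthant k, Yspace S s) where
  toFun y := ⟨crossPolytopePoint s τ y, crossPolytopePoint_mem_Yspace hτ y.2⟩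
  continuous_toFun :=
    (continuousOn_crossPolytopePoint.mono fun _ hy => hy.1).domRestrict.subtype_mk _

theorem inclBoundary_eq_crossPolytopeMap_comp (hτ : ∀ i, τ i ≠ s i) :
    inclBoundary S s = (crossPolytopeMap hτ).comp (boundaryCoords S s) := by
  ext f : 2
  exact (crossPolytopePoint_barycentric (τ := τ) f.2.1 f.2.2.1).symm

end CrossPolytope

/-- Let `S_1, …, S_k` be `0`-dimensional complexes each with at
least two vertices, `X = S_1 ∗ ⋯ ∗ S_k` their join, `Δ` a maximal `(k−1)`-simplex
with vertices `s_i ∈ S_i`, and `Y` the complex `X` with the interior of `Δ`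
removed. Then the inclusion `∂Δ → Y` is nullhomotopic. -/
theorem inclusion_boundary_nullhomotopic (k : ℕ) (hk : 1 ≤ k)
    (S : Fin k → Type) (hS : ∀ i, ∃ a b : S i, a ≠ b) (s : ∀ i, S i) :
    (inclBoundary S s).Nullhomotopic := by
  choose τ hτ using fun i => @exists_ne _ ⟨hS i⟩ (s i)
  have := contractibleSpace_puncturedComplPosOrthant hk
  rw [inclBoundary_eq_crossPolytopeMap_comp hτ]
  exact ((id_nullhomotopic _).comp_left (boundaryCoords S s)).comp_right (crossPolytopeMap hτ)
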